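/- arXiv:2105.12871 — 5 statements merged into one kernel-verified Lean document; each statement's English description precedes it below -/
import Mathlib

section
/- For every q-ary code C of length n, the average Hamming distance is bounded above as D(C) ≤ n·(1 − 1/q). -/
/-!
Splitting the Hamming distance over coordinates,
`∑ₓ ∑_y d(x, y) = ∑ᵢ (M² - ∑ₐ mᵢₐ²)`, where `mᵢₐ` counts the codewords
with `a` in coordinate `i`. Since `∑ₐ mᵢₐ = M`, Cauchy–Schwarz gives
`∑ₐ mᵢₐ² ≥ M² / q`, so each coordinate contributes at most `M² (1 - 1/q)`.
-/

open Finset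

namespace Finset

variable {α β : Type*} [Fintype α] [DecidableEq α]

theorem card_filter_prod_eq_eq_sum_card_fiber_sq (s : Finset β) (f : β → α) :
    #{p ∈ s ×ˢ s | f p.1 = f p.2} = ∑ a, #{x ∈ s | f x = a} ^ 2 := by
  rw [card_eq_sum_card_fiberwise (f := fun p => f p.1) (t := univ) (fun _ _ => mem_univ _)]
  refine sum_congr rfl fun a _ => ?_
  rw [sq, ← card_product, filter_filter]
  congr 1
  ext ⟨x, y⟩
  simp only [mem_filter, mem_product]
  grind

theorem card_sq_le_card_mul_card_filter_prod_eq (s : Finset β) (f : β → α) :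
    #s ^ 2 ≤ Fintype.card α * #{p ∈ s ×ˢ s | f p.1 = f p.2} := by
  rw [card_filter_prod_eq_eq_sum_card_fiber_sq,
    card_eq_sum_card_fiberwise (f := f) (t := univ) (fun _ _ => mem_univ _)]
  exact sq_sum_le_card_mul_sum_sq

theorem card_filter_prod_ne_le (s : Finset β) (f : β → α) :
    (#{p ∈ s ×ˢ s | f p.1 ≠ f p.2} : ℝ) ≤ (1 - 1 / Fintype.card α) * #s ^ 2 := by
  have hsplit : (#s : ℝ) ^ 2 =
      #{p ∈ s ×ˢ s | f p.1 = f p.2} + #{p ∈ s ×ˢ s | f p.1 ≠ f p.2} := by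
    rw [sq, ← Nat.cast_mul, ← card_product]
    exact_mod_cast (card_filter_add_card_filter_not _).symm
  have hcollisions : (#s : ℝ) ^ 2 / Fintype.card α ≤ #{p ∈ s ×ˢ s | f p.1 = f p.2} :=
    div_le_of_le_mul₀ (by positivity) (by positivity)
      (by rw [mul_comm]; exact_mod_cast card_sq_le_card_mul_card_filter_prod_eq s f)
  have hfactor : (1 - 1 / (Fintype.card α : ℝ)) * #s ^ 2 =
      #s ^ 2 - #s ^ 2 / Fintype.card α := by ring
  linarith

end Finset

section

variable {ι : Type*} [Fintype ι] {β : ι → Type*} [∀ i, DecidableEq (β i)]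

theorem sum_sum_hammingDist_eq (C : Finset (∀ i, β i)) :
    ∑ x ∈ C, ∑ y ∈ C, hammingDist x y = ∑ i, #{p ∈ C ×ˢ C | p.1 i ≠ p.2 i} := by
  simp only [hammingDist, card_filter]
  rw [← sum_product', sum_comm]

theorem sum_sum_hammingDist_le [∀ i, Fintype (β i)] (C : Finset (∀ i, β i)) :
    ∑ x ∈ C, ∑ y ∈ C, (hammingDist x y : ℝ) ≤
      (∑ i, (1 - 1 / Fintype.card (β i) : ℝ)) * #C ^ 2 :=
  calc ∑ x ∈ C, ∑ y ∈ C, (hammingDist x y : ℝ)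
    _ = ∑ i, (#{p ∈ C ×ˢ C | p.1 i ≠ p.2 i} : ℝ) := by
        exact_mod_cast sum_sum_hammingDist_eq C
    _ ≤ ∑ i, (1 - 1 / Fintype.card (β i) : ℝ) * #C ^ 2 :=
        sum_le_sum fun i _ => card_filter_prod_ne_le C fun x => x i
    _ = _ := (sum_mul ..).symm

end

theorem avg_hamming_dist_le_general (q n : ℕ) (C : Finset (Fin n → Fin q)) :
    (1 / (C.card : ℝ) ^ 2) * ∑ x ∈ C, ∑ y ∈ C, (hammingDist x y : ℝ) ≤
      (n : ℝ) * (1 - 1 / (q : ℝ)) := by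
  have hbound := sum_sum_hammingDist_le C
  simp only [Fintype.card_fin, sum_const, card_univ, nsmul_eq_mul] at hbound
  rw [one_div_mul_eq_div]
  refine div_le_of_le_mul₀ (by positivity) ?_ hbound
  exact mul_nonneg n.cast_nonneg (sub_nonneg.2 (by simpa using Nat.cast_inv_le_one q))

/-- For every `q`-ary code `C` of length `n`, the average Hamming
distance is bounded above as `D(C) ≤ n · (1 - 1/q)`. -/
theorem avg_hamming_dist_le (q n : ℕ) (hq : 2 ≤ q) (hn : 1 ≤ n)
    (C : Finset (Fin n → Fin q)) (hC : C.Nonempty) :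
    (1 / (C.card : ℝ) ^ 2) * ∑ x ∈ C, ∑ y ∈ C, (hammingDist x y : ℝ) ≤
      (n : ℝ) * (1 - 1 / (q : ℝ)) :=
  avg_hamming_dist_le_general q n C
end

section
/- For a q-ary code C of length n with M = |C|, the average Hamming distance attains the upper bound, D(C) = n·(1 − 1/q), if and only if x_{i,j} = 1/q for every coordinate i ∈ {1,…,n} and every symbol j ∈ Fin q (i.e., every symbol appears exactly M/q times in every coordinate). -/
/-!
Counting, coordinate by coordinate, the pairs of codewords that agree gives
`M² D(C) = n M² - ∑ᵢ ∑ⱼ (M xᵢⱼ)²`, i.e. `D(C) = n - ∑ᵢ ∑ⱼ xᵢⱼ²`. Since `∑ⱼ xᵢⱼ = 1`,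
`∑ⱼ xᵢⱼ² = 1/q + ∑ⱼ (xᵢⱼ - 1/q)² ≥ 1/q`, with equality exactly when the frequencies in
coordinate `i` are uniform.
-/

open Finset

section Fibers

variable {β α : Type*} [DecidableEq α] [Fintype α]

theorem Finset.sum_card_filter_apply_eq_eq_sum_sq (s : Finset β) (f : β → α) :
    ∑ x ∈ s, #{y ∈ s | f y = f x} = ∑ a, #{y ∈ s | f y = a} ^ 2 := by
  rw [← sum_fiberwise_of_maps_to (g := f) (t := univ) fun _ _ => mem_univ _]
  refine sum_congr rfl fun a _ => ?_
  have hfiber : ∀ x ∈ {x ∈ s | f x = a}, #{y ∈ s | f y = f x} = #{y ∈ s | f y = a} :=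
    fun x hx => by rw [(mem_filter.1 hx).2]
  rw [sum_congr rfl hfiber, sum_const, smul_eq_mul, sq]

theorem Finset.sum_card_filter_apply_eq_div_card_eq_one {s : Finset β} (hs : s.Nonempty)
    (f : β → α) : ∑ a, (#{y ∈ s | f y = a} : ℝ) / #s = 1 := by
  rw [← sum_div, ← Nat.cast_sum, ← card_eq_sum_card_fiberwise fun _ _ => mem_coe.2 (mem_univ _)]
  exact div_self (by exact_mod_cast hs.card_pos.ne')

end Fibers

section ProbabilityVector

variable {α : Type*} [Fintype α] {p : α → ℝ}

theorem sum_sq_sub_inv_card_eq (hp : ∑ a, p a = 1) :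
    ∑ a, (p a - 1 / Fintype.card α) ^ 2 = ∑ a, p a ^ 2 - 1 / Fintype.card α := by
  have hα : (Fintype.card α : ℝ) ≠ 0 := by
    have : Nonempty α := by
      by_contra h
      simp [not_nonempty_iff.1 h] at hp
    exact_mod_cast Fintype.card_ne_zero
  simp_rw [sub_sq, sum_add_distrib, sum_sub_distrib, ← sum_mul, ← mul_sum, hp, sum_const,
    card_univ, nsmul_eq_mul]
  field_simp
  ring

theorem inv_card_le_sum_sq (hp : ∑ a, p a = 1) : 1 / Fintype.card α ≤ ∑ a, p a ^ 2 := by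
  have := sum_sq_sub_inv_card_eq hp ▸ sum_nonneg fun a _ => sq_nonneg (p a - 1 / Fintype.card α)
  linarith

theorem sum_sq_eq_inv_card_iff (hp : ∑ a, p a = 1) :
    ∑ a, p a ^ 2 = 1 / Fintype.card α ↔ ∀ a, p a = 1 / Fintype.card α := by
  rw [← sub_eq_zero, ← sum_sq_sub_inv_card_eq hp,
    sum_eq_zero_iff_of_nonneg fun a _ => sq_nonneg _]
  simp [sub_eq_zero]

end ProbabilityVector

section Hamming

variable {ι α : Type*} [Fintype ι] [DecidableEq α]

theorem hammingDist_add_card_filter_eq (x y : ι → α) :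
    hammingDist x y + #{i | x i = y i} = Fintype.card ι := by
  rw [hammingDist, add_comm]
  exact card_filter_add_card_filter_not _

variable [Fintype α]

theorem sum_sum_card_filter_eq_sum_sum_sq_card_filter (C : Finset (ι → α)) :
    ∑ x ∈ C, ∑ y ∈ C, #{i | x i = y i} = ∑ i, ∑ a, #{c ∈ C | c i = a} ^ 2 := by
  calc ∑ x ∈ C, ∑ y ∈ C, #{i | x i = y i}
      = ∑ i, ∑ x ∈ C, ∑ y ∈ C, if y i = x i then 1 else 0 := by
        simp_rw [card_filter]
        rw [eq_comm, sum_comm]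
        refine sum_congr rfl fun x _ => ?_
        rw [sum_comm]
        simp_rw [eq_comm]
    _ = ∑ i, ∑ a, #{c ∈ C | c i = a} ^ 2 := by
        simp_rw [← card_filter]
        exact sum_congr rfl fun i _ => sum_card_filter_apply_eq_eq_sum_sq C (· i)

theorem sum_sum_hammingDist_add_sum_sum_sq_card_filter (C : Finset (ι → α)) :
    ∑ x ∈ C, ∑ y ∈ C, hammingDist x y + ∑ i, ∑ a, #{c ∈ C | c i = a} ^ 2 =
      Fintype.card ι * #C ^ 2 := by
  rw [← sum_sum_card_filter_eq_sum_sum_sq_card_filter, ← sum_add_distrib]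
  simp_rw [← sum_add_distrib, hammingDist_add_card_filter_eq, sum_const, smul_eq_mul]
  ring

theorem avg_hammingDist_eq_card_sub_sum_sum_sq {C : Finset (ι → α)} (hC : C.Nonempty) :
    1 / (#C : ℝ) ^ 2 * ∑ x ∈ C, ∑ y ∈ C, (hammingDist x y : ℝ) =
      Fintype.card ι - ∑ i, ∑ a, ((#{c ∈ C | c i = a} : ℝ) / #C) ^ 2 := by
  have hM : (#C : ℝ) ≠ 0 := by exact_mod_cast hC.card_pos.ne'
  have hcount := congrArg (Nat.cast : ℕ → ℝ) (sum_sum_hammingDist_add_sum_sum_sq_card_filter C)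
  push_cast at hcount
  simp_rw [div_pow, ← sum_div]
  field_simp
  linarith

theorem avg_hammingDist_eq_max_iff_forall_freq_eq {C : Finset (ι → α)} (hC : C.Nonempty) :
    1 / (#C : ℝ) ^ 2 * ∑ x ∈ C, ∑ y ∈ C, (hammingDist x y : ℝ) =
        Fintype.card ι * (1 - 1 / (Fintype.card α : ℝ)) ↔
      ∀ i a, (#{c ∈ C | c i = a} : ℝ) / #C = 1 / Fintype.card α := by
  have hfreq (i : ι) := sum_card_filter_apply_eq_div_card_eq_one hC (· i)
  rw [avg_hammingDist_eq_card_sub_sum_sum_sq hC]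
  calc _ ↔ ∑ i, ∑ a, ((#{c ∈ C | c i = a} : ℝ) / #C) ^ 2 =
        ∑ _i : ι, 1 / (Fintype.card α : ℝ) := by
        rw [sum_const, card_univ, nsmul_eq_mul]
        constructor <;> intro h <;> linarith
    _ ↔ ∀ i, ∑ a, ((#{c ∈ C | c i = a} : ℝ) / #C) ^ 2 = 1 / Fintype.card α := by
        rw [eq_comm, sum_eq_sum_iff_of_le fun i _ => inv_card_le_sum_sq (hfreq i)]
        simp only [mem_univ, true_implies, eq_comm]
    _ ↔ _ := forall_congr' fun i => sum_sq_eq_inv_card_iff (hfreq i)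

end Hamming

theorem avg_hamming_dist_eq_max_iff_general (q n : ℕ)
    (C : Finset (Fin n → Fin q)) (hC : C.Nonempty) :
    (1 / (C.card : ℝ) ^ 2) * ∑ x ∈ C, ∑ y ∈ C, (hammingDist x y : ℝ) =
        (n : ℝ) * (1 - 1 / (q : ℝ)) ↔
      ∀ (i : Fin n) (j : Fin q),
        ((C.filter fun c => c i = j).card : ℝ) / (C.card : ℝ) = 1 / (q : ℝ) := by
  simpa only [Fintype.card_fin] using avg_hammingDist_eq_max_iff_forall_freq_eq hC

/-- For a `q`-ary code `C` of length `n` with `M = |C|`, the average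
Hamming distance attains the upper bound, `D(C) = n · (1 - 1/q)`, if and only if
`x_{i,j} = 1/q` for every coordinate `i` and every symbol `j ∈ Fin q`. -/
theorem avg_hamming_dist_eq_max_iff (q n : ℕ) (hq : 2 ≤ q) (hn : 1 ≤ n)
    (C : Finset (Fin n → Fin q)) (hC : C.Nonempty) :
    (1 / (C.card : ℝ) ^ 2) * ∑ x ∈ C, ∑ y ∈ C, (hammingDist x y : ℝ) =
        (n : ℝ) * (1 - 1 / (q : ℝ)) ↔
      ∀ (i : Fin n) (j : Fin q),
        ((C.filter fun c => c i = j).card : ℝ) / (C.card : ℝ) = 1 / (q : ℝ) :=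
  avg_hamming_dist_eq_max_iff_general q n C hC
end

section
/- Let M = k·q with 1 ≤ k ≤ q^{n−1}. For t ∈ {0, 1, …, M−1}, let (a_n, …, a_1) be the base-q digits of t (a_1 the least significant digit) and let c(t) ∈ (Fin q)^n be given by c(t)_i = (a_1 + a_2 + ⋯ + a_i) mod q. Then the (n,q,k)-OptCeRA code C = {c(t) : 0 ≤ t ≤ M−1} has exactly M distinct codewords, and for every coordinate i ∈ {1,…,n} and every symbol j ∈ Fin q, exactly k codewords of C have symbol j at coordinate i, i.e., |{t < M : c(t)_i = j}| = k. -/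
/-!
Read `c(t)_i` as the prefix sum `σ_i(t) = a_1 + ⋯ + a_i` in `ZMod q`. The digits are recovered as
successive differences `a_i = σ_i(t) - σ_{i-1}(t)`, and since `M ≤ q^n` the numbers below `M` are
determined by their `n` lowest digits; hence `c` is injective on `[0, M)`. For the uniformity,
split `t = u q + r` with `r < q`: then `σ_i(t) = r + σ_{i-1}(u)`, so in each of the `k` blocks
`{u q, …, u q + q - 1}` exactly one `r` gives `σ_i(t) = j`.
-/

open Finset

namespace OptCeRA

theorem mod_pow_eq_of_digits_eq {q t t' m : ℕ} (h : ∀ l < m, t / q ^ l % q = t' / q ^ l % q) :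
    t % q ^ m = t' % q ^ m := by
  induction m with
  | zero => simp only [pow_zero, Nat.mod_one]
  | succ m ih =>
    rw [Nat.mod_pow_succ, Nat.mod_pow_succ, ih fun l hl => h l (by omega), h m (by omega)]

def prefixDigitSum (q t i : ℕ) : ZMod q :=
  ∑ l ∈ range i, ((t / q ^ l % q : ℕ) : ZMod q)

theorem val_prefixDigitSum (q t i : ℕ) :
    (prefixDigitSum q t i).val = (∑ l ∈ range i, t / q ^ l % q) % q := by
  rw [prefixDigitSum, ← Nat.cast_sum, ZMod.val_natCast]

theorem val_prefixDigitSum_succ_sub (q t l : ℕ) :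
    (prefixDigitSum q t (l + 1) - prefixDigitSum q t l).val = t / q ^ l % q := by
  simp only [prefixDigitSum]
  rw [sum_range_succ, add_sub_cancel_left, ZMod.val_natCast, Nat.mod_mod]

theorem eq_of_prefixDigitSum_eq {q n t t' : ℕ} (ht : t < q ^ n) (ht' : t' < q ^ n)
    (h : ∀ i < n, prefixDigitSum q t (i + 1) = prefixDigitSum q t' (i + 1)) : t = t' := by
  have hsum : ∀ i ≤ n, prefixDigitSum q t i = prefixDigitSum q t' i := by
    rintro (_ | i) hi
    · rfl
    · exact h i (by omega)
  rw [← Nat.mod_eq_of_lt ht, ← Nat.mod_eq_of_lt ht']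
  refine mod_pow_eq_of_digits_eq fun l hl => ?_
  rw [← val_prefixDigitSum_succ_sub, ← val_prefixDigitSum_succ_sub, hsum l (by omega),
    hsum (l + 1) hl]

theorem prefixDigitSum_succ (q t i : ℕ) :
    prefixDigitSum q t (i + 1) = t + prefixDigitSum q (t / q) i := by
  rw [prefixDigitSum, sum_range_succ', add_comm, pow_zero, Nat.div_one, ZMod.natCast_mod]
  congr 1
  refine sum_congr rfl fun l _ => ?_
  rw [pow_succ', Nat.div_div_eq_div_mul]

theorem card_filter_natCast_add_eq {q : ℕ} [NeZero q] (f : ℕ → ZMod q) (j : ZMod q) (k : ℕ) :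
    #{t ∈ range (k * q) | ((t : ℕ) : ZMod q) + f (t / q) = j} = k := by
  have hdiv : ∀ u, (u * q + (j - f u).val) / q = u := fun u => by
    rw [mul_comm, Nat.mul_add_div (NeZero.pos q), Nat.div_eq_of_lt (ZMod.val_lt _), add_zero]
  refine (card_nbij' (· / q) (fun u => u * q + (j - f u).val) ?_ ?_ ?_ fun u _ => hdiv u).trans
    (card_range k)
  · intro t ht
    simp only [coe_filter, mem_range, Set.mem_ofPred_eq, coe_range, Set.mem_Iio] at ht ⊢
    exact Nat.div_lt_of_lt_mul (by rw [mul_comm]; exact ht.1)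
  · intro u hu
    simp only [coe_filter, mem_range, Set.mem_ofPred_eq, coe_range, Set.mem_Iio] at hu ⊢
    refine ⟨?_, ?_⟩
    · have := ZMod.val_lt (j - f u)
      nlinarith
    · rw [hdiv]
      push_cast
      rw [ZMod.natCast_self, mul_zero, zero_add, ZMod.natCast_zmod_val, sub_add_cancel]
  · intro t ht
    simp only [coe_filter, mem_range, Set.mem_ofPred_eq] at ht
    dsimp only
    rw [← eq_sub_iff_add_eq.2 ht.2, ZMod.val_natCast, Nat.div_add_mod']

end OptCeRA

open OptCeRA in
/-- Let `M = k·q` with `1 ≤ k ≤ q^(n-1)`. For `t ∈ {0,…,M-1}`, let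
`(a_n,…,a_1)` be the base-`q` digits of `t` (`a_1` least significant, so the digit of
index `l`, `0 ≤ l < n`, is `t / q^l % q`) and let `c(t) ∈ (Fin q)ⁿ` be given by
`c(t)_i = (a_1 + ⋯ + a_i) mod q`. Then the `(n,q,k)`-OptCeRA code
`C = {c(t) : 0 ≤ t ≤ M-1}` has exactly `M` distinct codewords, and for every
coordinate `i` and every symbol `j ∈ Fin q`, exactly `k` codewords of `C` have
symbol `j` at coordinate `i`, i.e., `|{t < M : c(t)_i = j}| = k`. -/
theorem optcera_code_card_and_uniform (q n k : ℕ) (hq : 2 ≤ q) (hn : 1 ≤ n)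
    (hkq : k ≤ q ^ (n - 1)) :
    letI M : ℕ := k * q
    letI c : ℕ → Fin n → Fin q := fun t i =>
      ⟨(∑ l ∈ Finset.range (i.1 + 1), (t / q ^ l % q)) % q, Nat.mod_lt _ (by omega)⟩
    ((Finset.range M).image c).card = M ∧
      ∀ (i : Fin n) (j : Fin q),
        ((Finset.range M).filter fun t => c t i = j).card = k := by
  have : NeZero q := ⟨by omega⟩
  have hc : ∀ t (i : Fin n) (j : Fin q), (⟨(∑ l ∈ range (i.1 + 1), t / q ^ l % q) % q,
      Nat.mod_lt _ (by omega)⟩ : Fin q) = j ↔ prefixDigitSum q t (i.1 + 1) = (j.val : ℕ) := by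
    intro t i j
    rw [← (ZMod.val_injective q).eq_iff, ZMod.val_natCast_of_lt j.2, val_prefixDigitSum,
      Fin.ext_iff]
  have hM : k * q ≤ q ^ n := by
    calc k * q ≤ q ^ (n - 1) * q := Nat.mul_le_mul_right q hkq
      _ = q ^ n := pow_sub_one_mul (by omega) q
  refine ⟨?_, fun i j => ?_⟩
  · rw [card_image_of_injOn, card_range]
    intro t ht t' ht' h
    refine eq_of_prefixDigitSum_eq (n := n) ((mem_range.1 ht).trans_le hM)
      ((mem_range.1 ht').trans_le hM) fun i hi => ?_
    rw [(hc t ⟨i, hi⟩ _).1 (congrFun h ⟨i, hi⟩), (hc t' ⟨i, hi⟩ _).1 rfl]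
  · simp only [hc, prefixDigitSum_succ]
    exact card_filter_natCast_add_eq (fun u => prefixDigitSum q u i) (j.val : ZMod q) k
end

section
/- Let C ⊆ (Fin r)^2 be a code of size M in which every symbol appears exactly k = M/r times at each of the two coordinates, and let K devices independently and uniformly at random each select a codeword from C. Fix a codeword c ∈ C. The probability that c is not an inferred valid codeword — i.e., the probability that either no device selects a codeword with first coordinate c_1 or no device selects a codeword with second coordinate c_2 — equals 2·(1 − k/M)^K − (1 − (2k−1)/M)^K. -/
/-!
The event is the union of "no device picks a codeword with first coordinate `c 0`" and "no device
picks a codeword with second coordinate `c 1`". Each of these events and their intersection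
consists of the `ω` with values in a fixed subset of `C`, so it has `(size of the subset) ^ K`
elements; the two subsets have `M - k` elements each. A codeword is determined by its two
coordinates, so `c` is the only codeword agreeing with `c` in both, which leaves `M - (2k - 1)`
codewords for the intersection. Inclusion–exclusion gives the formula.
-/

open Finset

section PiFinset

variable {α ι : Type*} [Fintype ι] [DecidableEq ι] (s : Finset α)

theorem card_filter_forall_apply_eq_pow (p : α → Prop) [DecidablePred p] :
    #{ω : ι → s | ∀ u, p (ω u)} = #{a ∈ s | p a} ^ Fintype.card ι := by
  have h : ({ω : ι → s | ∀ u, p (ω u)} : Finset (ι → s)) =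
      Fintype.piFinset fun _ => {x : s | p x} := by
    ext ω
    simp [Fintype.mem_piFinset]
  rw [h, Fintype.card_piFinset, prod_const, card_univ, univ_eq_attach, filter_attach, card_map,
    card_attach]

theorem card_filter_forall_or_forall_add_pow [DecidableEq α] (p q : α → Prop) [DecidablePred p]
    [DecidablePred q] :
    #{ω : ι → s | (∀ u, p (ω u)) ∨ ∀ u, q (ω u)} + #{a ∈ s | p a ∧ q a} ^ Fintype.card ι =
      #{a ∈ s | p a} ^ Fintype.card ι + #{a ∈ s | q a} ^ Fintype.card ι := by
  have h := card_union_add_card_inter {ω : ι → s | ∀ u, p (ω u)} {ω : ι → s | ∀ u, q (ω u)}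
  rw [← filter_or, ← filter_and] at h
  simp only [← forall_and] at h
  rwa [← card_filter_forall_apply_eq_pow, ← card_filter_forall_apply_eq_pow,
    ← card_filter_forall_apply_eq_pow]

end PiFinset

section UniformCode

variable {r k : ℕ} {C : Finset (Fin 2 → Fin r)}

theorem card_filter_apply_ne_add (huniform : ∀ (i : Fin 2) (j : Fin r), #{d ∈ C | d i = j} = k)
    (i : Fin 2) (j : Fin r) : #{d ∈ C | d i ≠ j} + k = #C := by
  rw [← huniform i j, add_comm]
  exact card_filter_add_card_filter_not _

theorem card_filter_ne_and_ne_add (huniform : ∀ (i : Fin 2) (j : Fin r), #{d ∈ C | d i = j} = k)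
    {c : Fin 2 → Fin r} (hc : c ∈ C) :
    #{d ∈ C | d 0 ≠ c 0 ∧ d 1 ≠ c 1} + 2 * k = #C + 1 := by
  have hagree : {d ∈ C | d 0 = c 0 ∧ d 1 = c 1} = {c} := by
    ext d
    rw [mem_filter, mem_singleton, ← Fin.forall_fin_two (p := fun i => d i = c i), ← funext_iff]
    exact ⟨And.right, fun h => ⟨h ▸ hc, h⟩⟩
  have hunion := card_union_add_card_inter {d ∈ C | d 0 = c 0} {d ∈ C | d 1 = c 1}
  rw [← filter_or, ← filter_and, hagree, huniform, huniform, card_singleton] at hunion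
  rw [← card_filter_add_card_filter_not (s := C) (p := fun d => d 0 = c 0 ∨ d 1 = c 1)]
  simp only [ne_eq, not_or] at hunion ⊢
  omega

end UniformCode

theorem prob_not_inferred_valid_general (r k K : ℕ)
    (C : Finset (Fin 2 → Fin r))
    (huniform : ∀ (i : Fin 2) (j : Fin r), (C.filter fun d => d i = j).card = k)
    (c : Fin 2 → Fin r) (hc : c ∈ C) :
    ((Finset.univ.filter fun ω : Fin K → {x // x ∈ C} =>
          (∀ u : Fin K, (ω u : Fin 2 → Fin r) 0 ≠ c 0) ∨
          (∀ u : Fin K, (ω u : Fin 2 → Fin r) 1 ≠ c 1)).card : ℝ) /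
        (Fintype.card (Fin K → {x // x ∈ C}) : ℝ) =
      2 * (1 - (k : ℝ) / (C.card : ℝ)) ^ K -
        (1 - (2 * (k : ℝ) - 1) / (C.card : ℝ)) ^ K := by
  have hcount := card_filter_forall_or_forall_add_pow (ι := Fin K) C (fun d => d 0 ≠ c 0)
    (fun d => d 1 ≠ c 1)
  have h0 := card_filter_apply_ne_add huniform 0 (c 0)
  have h1 := card_filter_apply_ne_add huniform 1 (c 1)
  have h01 := card_filter_ne_and_ne_add huniform hc
  rw [show #{d ∈ C | d 1 ≠ c 1} = #{d ∈ C | d 0 ≠ c 0} by omega, ← two_mul,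
    Fintype.card_fin] at hcount
  rify at h0 h01
  have hk : (#C - k : ℝ) = #{d ∈ C | d 0 ≠ c 0} := by linarith
  have h2k : (#C - (2 * k - 1) : ℝ) = #{d ∈ C | d 0 ≠ c 0 ∧ d 1 ≠ c 1} := by linarith
  have hC : (#C : ℝ) ≠ 0 := by exact_mod_cast (card_pos.2 ⟨c, hc⟩).ne'
  have hsub (x : ℝ) : 1 - x / #C = (#C - x) / #C := by field_simp
  rw [Fintype.card_fun, Fintype.card_coe, Fintype.card_fin, Nat.cast_pow, hsub, hsub, div_pow,
    div_pow, ← mul_div_assoc, ← sub_div, div_left_inj' (pow_ne_zero K hC), eq_sub_iff_add_eq,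
    hk, h2k]
  exact_mod_cast hcount

/-- Let `C ⊆ (Fin r)²` be a code of size `M = k·r` in which every
symbol appears exactly `k` times at each of the two coordinates, and let `K` devices
independently and uniformly at random each select a codeword from `C` (uniform measure
on `ω : Fin K → C`). Fix a codeword `c ∈ C`. The probability that `c` is not an
inferred valid codeword — i.e., that either no device selects a codeword with first
coordinate `c_1` or no device selects a codeword with second coordinate `c_2` — equals
`2·(1 - k/M)^K - (1 - (2k-1)/M)^K`. -/
theorem prob_not_inferred_valid (r k K : ℕ) (hr : 2 ≤ r) (hK : 1 ≤ K)
    (C : Finset (Fin 2 → Fin r)) (hM : C.card = k * r)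
    (huniform : ∀ (i : Fin 2) (j : Fin r), (C.filter fun d => d i = j).card = k)
    (c : Fin 2 → Fin r) (hc : c ∈ C) :
    ((Finset.univ.filter fun ω : Fin K → {x // x ∈ C} =>
          (∀ u : Fin K, (ω u : Fin 2 → Fin r) 0 ≠ c 0) ∨
          (∀ u : Fin K, (ω u : Fin 2 → Fin r) 1 ≠ c 1)).card : ℝ) /
        (Fintype.card (Fin K → {x // x ∈ C}) : ℝ) =
      2 * (1 - (k : ℝ) / (C.card : ℝ)) ^ K -
        (1 - (2 * (k : ℝ) - 1) / (C.card : ℝ)) ^ K :=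
  prob_not_inferred_valid_general r k K C huniform c hc
end

section
/- (Expectation of the number of inferred valid codewords) Let C ⊆ (Fin r)^2 be a code of size M in which every symbol appears exactly k = M/r times at each of the two coordinates, and let K devices independently and uniformly at random each select a codeword from C. Let V(ω) be the number of inferred valid codewords, i.e., the number of c ∈ C such that some device's codeword agrees with c in coordinate 1 and some device's codeword agrees with c in coordinate 2. Then E[V] = M · (1 − [2·(1 − k/M)^K − (1 − (2k−1)/M)^K]). -/
/-!
By linearity of expectation it suffices to count, for each `c ∈ C`, the outcomes in which `c`
is inferred valid. Such an outcome fails exactly when all devices avoid the symbol `c 0` in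
coordinate `0` or all avoid `c 1` in coordinate `1`; inclusion–exclusion over these two events
reduces the count to the number of codewords avoiding one given symbol (`M - k`) and avoiding
both (`M - 2k + 1`, since `c` is the only codeword sharing both of its symbols).
-/

open Finset

theorem cast_card_filter_and {R β : Type*} [CommRing R] (s : Finset β) (A B : β → Prop)
    [DecidablePred A] [DecidablePred B] :
    (#{x ∈ s | A x ∧ B x} : R) =
      #s - #{x ∈ s | ¬A x} - #{x ∈ s | ¬B x} + #{x ∈ s | ¬A x ∧ ¬B x} := by
  rw [card_eq_sum_ones s]
  simp only [natCast_card_filter, Nat.cast_sum, Nat.cast_one]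
  rw [← sum_sub_distrib, ← sum_sub_distrib, ← sum_add_distrib]
  refine sum_congr rfl fun x _ => ?_
  by_cases A x <;> by_cases B x <;> simp [*]

theorem card_pi_filter_forall {ι α : Type*} [Fintype ι] [DecidableEq ι] [Fintype α]
    (p : α → Prop) [DecidablePred p] :
    #{ω : ι → α | ∀ u, p (ω u)} = #{a | p a} ^ Fintype.card ι := by
  have hpi : ({ω : ι → α | ∀ u, p (ω u)} : Finset (ι → α)) =
      Fintype.piFinset fun _ => ({a | p a} : Finset α) := by
    ext
    simp
  rw [hpi, Fintype.card_piFinset, prod_const, card_univ]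

theorem cast_card_pi_filter_exists_and_exists {R ι α : Type*} [CommRing R] [Fintype ι]
    [DecidableEq ι] [Fintype α] (p q : α → Prop) [DecidablePred p] [DecidablePred q] :
    (#{ω : ι → α | (∃ u, p (ω u)) ∧ ∃ u, q (ω u)} : R) =
      Fintype.card α ^ Fintype.card ι - #{a | ¬p a} ^ Fintype.card ι
        - #{a | ¬q a} ^ Fintype.card ι + #{a | ¬p a ∧ ¬q a} ^ Fintype.card ι := by
  rw [cast_card_filter_and]
  simp only [not_exists, ← forall_and]
  rw [card_pi_filter_forall (fun a => ¬p a), card_pi_filter_forall (fun a => ¬q a),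
    card_pi_filter_forall (fun a => ¬p a ∧ ¬q a), card_univ, Fintype.card_fun]
  push_cast
  rfl

theorem card_univ_filter_subtype {α : Type*} (s : Finset α) (p : α → Prop) [DecidablePred p] :
    #{x : s | p x} = #{x ∈ s | p x} := by
  rw [univ_eq_attach, filter_attach, card_map, card_attach]

section TwoCoordinateCode

variable {R β : Type*} [CommRing R] [DecidableEq β] {C : Finset (Fin 2 → β)} {k : ℕ}

theorem cast_card_filter_coord_ne (huniform : ∀ i j, #{d ∈ C | d i = j} = k)
    (i : Fin 2) (j : β) :
    (#{d ∈ C | ¬d i = j} : R) = #C - k := by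
  rw [← huniform i j, ← card_filter_add_card_filter_not (s := C) (p := fun d => d i = j)]
  push_cast
  ring

theorem filter_coords_eq_singleton {c : Fin 2 → β} (hc : c ∈ C) :
    {d ∈ C | d 0 = c 0 ∧ d 1 = c 1} = {c} := by
  ext d
  have hcoords : d 0 = c 0 ∧ d 1 = c 1 ↔ d = c := by rw [funext_iff, Fin.forall_fin_two]
  simp only [mem_filter, mem_singleton, hcoords]
  exact ⟨And.right, fun h => ⟨h ▸ hc, h⟩⟩

theorem cast_card_filter_coords_ne (huniform : ∀ i j, #{d ∈ C | d i = j} = k)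
    {c : Fin 2 → β} (hc : c ∈ C) :
    (#{d ∈ C | ¬d 0 = c 0 ∧ ¬d 1 = c 1} : R) = #C + 1 - 2 * k := by
  have h := cast_card_filter_and (R := R) C (fun d => ¬d 0 = c 0) (fun d => ¬d 1 = c 1)
  simp only [not_not, filter_coords_eq_singleton hc, huniform, card_singleton] at h
  rw [h]
  push_cast
  ring

theorem cast_card_inferred_valid (huniform : ∀ i j, #{d ∈ C | d i = j} = k)
    {ι : Type*} [Fintype ι] [DecidableEq ι] {c : Fin 2 → β} (hc : c ∈ C) :
    (#{ω : ι → C | (∃ u, (ω u : Fin 2 → β) 0 = c 0) ∧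
      ∃ u, (ω u : Fin 2 → β) 1 = c 1} : R) =
      #C ^ Fintype.card ι - 2 * (#C - k) ^ Fintype.card ι
        + (#C + 1 - 2 * k) ^ Fintype.card ι := by
  rw [cast_card_pi_filter_exists_and_exists (fun d : C => (d : Fin 2 → β) 0 = c 0)
    (fun d : C => (d : Fin 2 → β) 1 = c 1),
    card_univ_filter_subtype C (fun d => ¬d 0 = c 0),
    card_univ_filter_subtype C (fun d => ¬d 1 = c 1),
    card_univ_filter_subtype C (fun d => ¬d 0 = c 0 ∧ ¬d 1 = c 1),
    cast_card_filter_coord_ne huniform, cast_card_filter_coord_ne huniform,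
    cast_card_filter_coords_ne huniform hc, Fintype.card_coe]
  ring

end TwoCoordinateCode

theorem expectation_inferred_valid_codewords_general (r k K : ℕ)
    (C : Finset (Fin 2 → Fin r))
    (huniform : ∀ (i : Fin 2) (j : Fin r), (C.filter fun d => d i = j).card = k) :
    (∑ ω : Fin K → {x // x ∈ C},
        ((C.filter fun c =>
          (∃ u : Fin K, (ω u : Fin 2 → Fin r) 0 = c 0) ∧
          (∃ u : Fin K, (ω u : Fin 2 → Fin r) 1 = c 1)).card : ℝ)) /
        (Fintype.card (Fin K → {x // x ∈ C}) : ℝ) =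
      (C.card : ℝ) * (1 - (2 * (1 - (k : ℝ) / (C.card : ℝ)) ^ K -
        (1 - (2 * (k : ℝ) - 1) / (C.card : ℝ)) ^ K)) := by
  rw [Fintype.card_fun, Fintype.card_coe, Fintype.card_fin]
  calc _ = (∑ _c ∈ C, ((#C : ℝ) ^ K - 2 * (#C - k) ^ K + (#C + 1 - 2 * k) ^ K))
          / (#C : ℝ) ^ K := by
        push_cast
        congr 1
        simp_rw [← sum_boole]
        rw [sum_comm]
        refine sum_congr rfl fun c hc => ?_
        rw [sum_boole]
        have h := cast_card_inferred_valid (R := ℝ) huniform (ι := Fin K) hc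
        rw [Fintype.card_fin] at h
        -- `convert` reconciles the two `Decidable` instances of the filter predicate.
        convert h using 4
    _ = _ := by
      rw [sum_const, nsmul_eq_mul]
      rcases (#C).eq_zero_or_pos with hC | hC
      · simp [hC]
      · have hC' : (#C : ℝ) ≠ 0 := by positivity
        rw [one_sub_div hC', one_sub_div hC', div_pow, div_pow]
        field_simp
        ring

/-- **Expectation of the number of inferred valid codewords.** Let
`C ⊆ (Fin r)²` be a code of size `M = k·r` in which every symbol appears exactly `k`
times at each of the two coordinates, and let `K` devices independently and uniformly
at random each select a codeword from `C` (uniform measure on `ω : Fin K → C`). Let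
`V(ω)` be the number of inferred valid codewords, i.e., the number of `c ∈ C` such that
some device's codeword agrees with `c` in coordinate 1 and some device's codeword
agrees with `c` in coordinate 2. Then
`E[V] = M · (1 - [2·(1 - k/M)^K - (1 - (2k-1)/M)^K])`. -/
theorem expectation_inferred_valid_codewords (r k K : ℕ) (hr : 2 ≤ r) (hK : 1 ≤ K)
    (C : Finset (Fin 2 → Fin r)) (hM : C.card = k * r)
    (huniform : ∀ (i : Fin 2) (j : Fin r), (C.filter fun d => d i = j).card = k) :
    (∑ ω : Fin K → {x // x ∈ C},
        ((C.filter fun c =>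
          (∃ u : Fin K, (ω u : Fin 2 → Fin r) 0 = c 0) ∧
          (∃ u : Fin K, (ω u : Fin 2 → Fin r) 1 = c 1)).card : ℝ)) /
        (Fintype.card (Fin K → {x // x ∈ C}) : ℝ) =
      (C.card : ℝ) * (1 - (2 * (1 - (k : ℝ) / (C.card : ℝ)) ^ K -
        (1 - (2 * (k : ℝ) - 1) / (C.card : ℝ)) ^ K)) :=
  expectation_inferred_valid_codewords_general r k K C huniform
end
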